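/- Let V be a finite-dimensional real inner product space, g an invertible linear map of V, and a vector x ∈ V with ‖x‖ = 1. Write g = k a u where k, u are orthogonal and a is self-adjoint positive with eigenvalues a₁ ≥ a₂ ≥ … ≥ a_d > 0. Suppose y is the orthogonal projection of x onto the eigenspace line of uᵗ a corresponding to the largest eigenvalue a₁, assumed simple. Then ‖g x‖ ≥ a₁ ‖y‖. -/

import Mathlib

open scoped RealInnerProductSpace

/-!
Since `a` is self-adjoint and `u` is an isometry, pairing `a (u x)` with the `a₁`-eigenvector
`u y` gives `⟪a (u x), u y⟫ = a₁ ⟪x, y⟫ = a₁ ‖y‖²`, and Cauchy–Schwarz bounds the left side by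
`‖a (u x)‖ ‖y‖`. The outer isometry `k` does not change the norm.
-/

open Module.End

namespace LinearMap.IsSymmetric

variable {E : Type*} [NormedAddCommGroup E] [InnerProductSpace ℝ E] {T : E →ₗ[ℝ] E}

theorem inner_apply_starProjection_of_le_eigenspace (hT : T.IsSymmetric) {μ : ℝ}
    {K : Submodule ℝ E} [K.HasOrthogonalProjection] (hK : K ≤ eigenspace T μ) (v : E) :
    ⟪T v, K.starProjection v⟫ = μ * ‖K.starProjection v‖ ^ 2 := by
  set w := K.starProjection v
  have hTw : T w = μ • w := mem_eigenspace_iff.mp (hK (K.starProjection_apply_mem v))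
  have hvw : ⟪v, w⟫ = ⟪w, w⟫ :=
    sub_eq_zero.mp <| by
      rw [← inner_sub_left]; exact K.starProjection_inner_eq_zero v w (K.starProjection_apply_mem v)
  rw [hT, hTw, real_inner_smul_right, hvw, real_inner_self_eq_norm_sq]

theorem mul_norm_starProjection_le_norm_apply (hT : T.IsSymmetric) {μ : ℝ}
    {K : Submodule ℝ E} [K.HasOrthogonalProjection] (hK : K ≤ eigenspace T μ) (v : E) :
    μ * ‖K.starProjection v‖ ≤ ‖T v‖ := by
  set w := K.starProjection v
  rcases (norm_nonneg w).eq_or_lt with hw | hw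
  · rw [← hw, mul_zero]; exact norm_nonneg _
  have hcs : μ * ‖w‖ ^ 2 ≤ ‖T v‖ * ‖w‖ :=
    hT.inner_apply_starProjection_of_le_eigenspace hK v ▸ real_inner_le_norm _ _
  exact le_of_mul_le_mul_right (by linarith) hw

end LinearMap.IsSymmetric

theorem stmt14_general {V : Type*} [NormedAddCommGroup V] [InnerProductSpace ℝ V]
    [FiniteDimensional ℝ V]
    (k u : V ≃ₗᵢ[ℝ] V) (a : V →L[ℝ] V) (hsa : IsSelfAdjoint a)
    (a₁ : ℝ)
    (x : V)
    (W : Submodule ℝ V)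
    (hW : W = (Module.End.eigenspace (a : V →ₗ[ℝ] V) a₁).map
        u.symm.toLinearEquiv.toLinearMap)
    (y : V) (hy : y = (W.orthogonalProjection x : V)) :
    a₁ * ‖y‖ ≤ ‖k (a (u x))‖ := by
  have hnorm : ‖y‖ = ‖(eigenspace (a : V →ₗ[ℝ] V) a₁).starProjection (u x)‖ := by
    rw [hy, hW, ← Submodule.starProjection_apply, Submodule.starProjection_map_apply, u.symm_symm,
      u.symm.norm_map]
  rw [hnorm, k.norm_map]
  exact hsa.isSymmetric.mul_norm_starProjection_le_norm_apply le_rfl (u x)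

/-- Let `g = k a u` with `k, u` orthogonal and `a` self-adjoint positive definite with simple
largest eigenvalue `a₁`, and let `y` be the orthogonal projection of a unit vector `x` onto the
line `u⁻¹·(a₁-eigenspace of a)`. Then `‖g x‖ ≥ a₁ ‖y‖`. -/
theorem stmt14 {V : Type*} [NormedAddCommGroup V] [InnerProductSpace ℝ V]
    [FiniteDimensional ℝ V]
    (k u : V ≃ₗᵢ[ℝ] V) (a : V →L[ℝ] V) (hsa : IsSelfAdjoint a)
    (hpos : ∀ v : V, v ≠ 0 → 0 < ⟪a v, v⟫)
    (a₁ : ℝ) (ha₁ : Module.End.HasEigenvalue (a : V →ₗ[ℝ] V) a₁)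
    (hmax : ∀ μ : ℝ, Module.End.HasEigenvalue (a : V →ₗ[ℝ] V) μ → μ ≤ a₁)
    (hsimple : Module.finrank ℝ (Module.End.eigenspace (a : V →ₗ[ℝ] V) a₁) = 1)
    (x : V) (hx : ‖x‖ = 1)
    (W : Submodule ℝ V)
    (hW : W = (Module.End.eigenspace (a : V →ₗ[ℝ] V) a₁).map
        u.symm.toLinearEquiv.toLinearMap)
    (y : V) (hy : y = (W.orthogonalProjection x : V)) :
    a₁ * ‖y‖ ≤ ‖k (a (u x))‖ :=
  stmt14_general k u a hsa a₁ x W hW y hy
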